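/- There exist infinitely many integers g ≥ 2 such that M(g) = 4(g − 1). In particular, for every prime p with p > 6 and gcd((p − 1)/2, 6) = 1 (equivalently, every prime p of the form 12k − 1), setting g = p + 1 gives M(g) = 4(g − 1) = 4p, and by Dirichlet's theorem there are infinitely many such primes. -/

import Mathlib

open scoped Classical

/-- A finite connected multigraph without loop edges. -/
structure Multigraph where
  V : Type
  E : Type
  [fintypeV : Fintype V]
  [fintypeE : Fintype E]
  ends : E → Sym2 V
  loopless : ∀ e : E, ¬ (ends e).IsDiag
  connected : (SimpleGraph.fromRel fun x y : V => ∃ e : E, ends e = s(x, y)).Connected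

attribute [instance] Multigraph.fintypeV Multigraph.fintypeE

namespace Multigraph

/-- The genus (first Betti number, cyclomatic number) of a multigraph. -/
def genus (G : Multigraph) : ℤ :=
  (Fintype.card G.E : ℤ) - (Fintype.card G.V : ℤ) + 1

/-- A cycle in a multigraph, given as a nonempty set of edges such that every vertex is
incident to either 0 or 2 of its edges. -/
def IsCycleSet (G : Multigraph) (C : Set G.E) : Prop :=
  C.Nonempty ∧ ∀ x : G.V,
    Nat.card {e : G.E // e ∈ C ∧ x ∈ G.ends e} = 0 ∨
    Nat.card {e : G.E // e ∈ C ∧ x ∈ G.ends e} = 2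

end Multigraph

/-- A morphism of multigraphs: vertices go to vertices, and each edge goes either to an
edge joining the images of its endpoints, or to the common image of its endpoints
(in which case the edge is *vertical*). -/
structure Morphism (G G' : Multigraph) where
  vmap : G.V → G'.V
  emap : G.E → G'.E ⊕ G'.V
  compat : ∀ e : G.E,
    (∀ e', emap e = Sum.inl e' → G'.ends e' = (G.ends e).map vmap) ∧
    (∀ v, emap e = Sum.inr v → (G.ends e).map vmap = Sym2.diag v)

namespace Morphism

/-- A morphism is harmonic if for every vertex `x`, the number of edges incident to `x`
mapping to a given edge `e'` incident to `φ(x)` is independent of the choice of `e'`. -/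
def Harmonic {G G' : Multigraph} (φ : Morphism G G') : Prop :=
  ∀ (x : G.V) (e₁ e₂ : G'.E), φ.vmap x ∈ G'.ends e₁ → φ.vmap x ∈ G'.ends e₂ →
    Nat.card {e : G.E // x ∈ G.ends e ∧ φ.emap e = Sum.inl e₁} =
    Nat.card {e : G.E // x ∈ G.ends e ∧ φ.emap e = Sum.inl e₂}

/-- A morphism is nonconstant if its image is not a single vertex. -/
def Nonconstant {G G' : Multigraph} (φ : Morphism G G') : Prop :=
  ∃ x y : G.V, φ.vmap x ≠ φ.vmap y

/-- Composition of morphisms of multigraphs. -/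
def comp {G₁ G₂ G₃ : Multigraph} (ψ : Morphism G₂ G₃) (φ : Morphism G₁ G₂) :
    Morphism G₁ G₃ where
  vmap := ψ.vmap ∘ φ.vmap
  emap e := Sum.elim ψ.emap (fun v => Sum.inr (ψ.vmap v)) (φ.emap e)
  compat e := by
    constructor
    · intro e'' h
      rcases hφ : φ.emap e with e' | v
      · simp only [hφ, Sum.elim_inl] at h
        have h1 := (φ.compat e).1 e' hφ
        have h2 := (ψ.compat e').1 e'' h
        rw [h2, h1, Sym2.map_map]
      · simp only [hφ, Sum.elim_inr] at h
        simp at h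
    · intro v h
      rcases hφ : φ.emap e with e' | v₀
      · simp only [hφ, Sum.elim_inl] at h
        have h1 := (φ.compat e).1 e' hφ
        have h2 := (ψ.compat e').2 v h
        rw [← Sym2.map_map, ← h1]
        exact h2
      · simp only [hφ, Sum.elim_inr, Sum.inr.injEq] at h
        have h1 := (φ.compat e).2 v₀ hφ
        subst h
        rw [← Sym2.map_map, h1]
        rfl
end Morphism

/-- A group of automorphisms of a multigraph `G` (a faithful action of `Γ` on `G` by
automorphisms, i.e. a subgroup of `Aut(G)`). -/
structure GraphAction (Γ : Type) [Group Γ] (G : Multigraph) where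
  actV : Γ →* Equiv.Perm G.V
  actE : Γ →* Equiv.Perm G.E
  ends_map : ∀ (γ : Γ) (e : G.E), G.ends (actE γ e) = (G.ends e).map (actV γ)
  faithful : ∀ γ : Γ, (∀ x : G.V, actV γ x = x) → (∀ e : G.E, actE γ e = e) → γ = 1

namespace GraphAction

variable {Γ : Type} [Group Γ] {G : Multigraph}

/-- Two vertices lie in the same `Δ`-orbit. -/
def vrel (A : GraphAction Γ G) (Δ : Subgroup Γ) (x y : G.V) : Prop :=
  ∃ δ ∈ Δ, A.actV δ x = y

/-- Two edges lie in the same `Δ`-orbit. -/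
def erel (A : GraphAction Γ G) (Δ : Subgroup Γ) (e f : G.E) : Prop :=
  ∃ δ ∈ Δ, A.actE δ e = f

/-- The setoid of `Δ`-orbits of vertices. -/
def vSetoid (A : GraphAction Γ G) (Δ : Subgroup Γ) : Setoid G.V where
  r := A.vrel Δ
  iseqv := by
    constructor
    · intro x; exact ⟨1, Δ.one_mem, by simp⟩
    · rintro x y ⟨δ, hδ, h⟩
      refine ⟨δ⁻¹, Δ.inv_mem hδ, ?_⟩
      rw [map_inv, ← h]
      exact (A.actV δ).symm_apply_apply x
    · rintro x y z ⟨δ₁, h1, e1⟩ ⟨δ₂, h2, e2⟩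
      refine ⟨δ₂ * δ₁, Δ.mul_mem h2 h1, ?_⟩
      rw [map_mul]
      simp [Equiv.Perm.mul_apply, e1, e2]

/-- The setoid of `Δ`-orbits of edges. -/
def eSetoid (A : GraphAction Γ G) (Δ : Subgroup Γ) : Setoid G.E where
  r := A.erel Δ
  iseqv := by
    constructor
    · intro e; exact ⟨1, Δ.one_mem, by simp⟩
    · rintro e f ⟨δ, hδ, h⟩
      refine ⟨δ⁻¹, Δ.inv_mem hδ, ?_⟩
      rw [map_inv, ← h]
      exact (A.actE δ).symm_apply_apply e
    · rintro e f k ⟨δ₁, h1, e1⟩ ⟨δ₂, h2, e2⟩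
      refine ⟨δ₂ * δ₁, Δ.mul_mem h2 h1, ?_⟩
      rw [map_mul]
      simp [Equiv.Perm.mul_apply, e1, e2]

/-- An edge is `Δ`-vertical if its two endpoints lie in the same `Δ`-orbit (so it is
contracted by the quotient morphism `G → G/Δ`). -/
def Vertical (A : GraphAction Γ G) (Δ : Subgroup Γ) (e : G.E) : Prop :=
  ∃ x y : G.V, G.ends e = s(x, y) ∧ A.vrel Δ x y

/-- The vertex set of the quotient graph `G/Δ`: the `Δ`-orbits of vertices. -/
abbrev quotV (A : GraphAction Γ G) (Δ : Subgroup Γ) : Type :=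
  Quotient (A.vSetoid Δ)

/-- The edge set of the quotient graph `G/Δ`: the `Δ`-orbits of non-vertical edges. -/
abbrev quotE (A : GraphAction Γ G) (Δ : Subgroup Γ) : Type :=
  Quotient ((A.eSetoid Δ).comap (Subtype.val : {e : G.E // ¬ A.Vertical Δ e} → G.E))

/-- The genus of the quotient graph `G/Δ`. -/
noncomputable def quotGenus (A : GraphAction Γ G) (Δ : Subgroup Γ) : ℤ :=
  (Nat.card (A.quotE Δ) : ℤ) - (Nat.card (A.quotV Δ) : ℤ) + 1

/-- The order of the stabilizer `Δ_x` of a vertex `x`. -/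
noncomputable def stabOrder (A : GraphAction Γ G) (Δ : Subgroup Γ) (x : G.V) : ℕ :=
  Nat.card {γ : Γ // γ ∈ Δ ∧ A.actV γ x = x}

/-- The vertical multiplicity of a vertex `x`: the number of `Δ`-vertical edges
incident to `x`. -/
noncomputable def vertMult (A : GraphAction Γ G) (Δ : Subgroup Γ) (x : G.V) : ℕ :=
  Nat.card {e : G.E // x ∈ G.ends e ∧ A.Vertical Δ e}

/-- `r_y = |Δ_x|` for a vertex `y` of the quotient `G/Δ` and any `x` in the fiber over `y`. -/
noncomputable def r (A : GraphAction Γ G) (Δ : Subgroup Γ) (y : A.quotV Δ) : ℕ :=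
  A.stabOrder Δ (Quotient.out y)

/-- `w_y = v(x)/|Δ_x|` for a vertex `y` of the quotient `G/Δ` and any `x` in the fiber. -/
noncomputable def w (A : GraphAction Γ G) (Δ : Subgroup Γ) (y : A.quotV Δ) : ℕ :=
  A.vertMult Δ (Quotient.out y) / A.r Δ y

/-- The ramification number `R = Σ_y [2(1 - 1/r_y) + w_y]` of the quotient map `G → G/Δ`. -/
noncomputable def ram (A : GraphAction Γ G) (Δ : Subgroup Γ) : ℚ :=
  ∑ᶠ y : A.quotV Δ, (2 * (1 - 1 / (A.r Δ y : ℚ)) + (A.w Δ y : ℚ))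

/-- A vertex `y` of the quotient `G/Δ` is a branch point if `2(1 - 1/r_y) + w_y > 0`. -/
def IsBranch (A : GraphAction Γ G) (Δ : Subgroup Γ) (y : A.quotV Δ) : Prop :=
  0 < 2 * (1 - 1 / (A.r Δ y : ℚ)) + (A.w Δ y : ℚ)

/-- The quotient morphism `φ_Δ : G → G/Δ` is harmonic: for every vertex `x` of `G` and
every pair of quotient edges incident to the image of `x`, the numbers of preimages
incident to `x` agree. -/
def QuotHarmonic (A : GraphAction Γ G) (Δ : Subgroup Γ) : Prop :=
  ∀ (x : G.V) (e₁ e₂ : G.E), ¬ A.Vertical Δ e₁ → ¬ A.Vertical Δ e₂ →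
    (∃ v ∈ G.ends e₁, A.vrel Δ x v) → (∃ v ∈ G.ends e₂, A.vrel Δ x v) →
    Nat.card {e : G.E // x ∈ G.ends e ∧ A.erel Δ e e₁} =
    Nat.card {e : G.E // x ∈ G.ends e ∧ A.erel Δ e e₂}

/-- The quotient morphism `φ_Δ : G → G/Δ` is non-degenerate: no neighborhood `x(1)` is
contracted to a vertex, i.e. every vertex has a neighbor outside its `Δ`-orbit. -/
def QuotNondeg (A : GraphAction Γ G) (Δ : Subgroup Γ) : Prop :=
  ∀ x : G.V, ∃ e : G.E, x ∈ G.ends e ∧ ∃ y ∈ G.ends e, ¬ A.vrel Δ x y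

/-- `Γ` acts harmonically on `G` if for every subgroup `Δ ≤ Γ` the quotient morphism
`φ_Δ : G → G/Δ` is harmonic and non-degenerate. -/
def ActsHarmonically (A : GraphAction Γ G) : Prop :=
  ∀ Δ : Subgroup Γ, A.QuotHarmonic Δ ∧ A.QuotNondeg Δ

/-- The quotient map `G → G/Δ` is horizontally unramified: all vertex stabilizers in `Δ`
are trivial. -/
def HorizUnramified (A : GraphAction Γ G) (Δ : Subgroup Γ) : Prop :=
  ∀ (x : G.V) (γ : Γ), γ ∈ Δ → A.actV γ x = x → γ = 1

end GraphAction

/-- `M g` is the maximal order of a group acting harmonically on a graph of genus `g`. -/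
noncomputable def M (g : ℕ) : ℕ :=
  sSup {n : ℕ | ∃ (Γ : Type) (i : Group Γ) (G : Multigraph) (A : @GraphAction Γ i G),
    @GraphAction.ActsHarmonically Γ i G A ∧ G.genus = (g : ℤ) ∧ Nat.card Γ = n}

/-!
Upper bound. A harmonic action is rigid: an element fixing a vertex and an edge at it is trivial,
because harmonicity of `G → G/⟨γ⟩` at the fixed vertex propagates along the connected graph.
Hence `Δ` acts freely on the edges it does not contract and each stabilizer `Δ_x` acts freely on
the contracted edges at `x`, which gives the Riemann–Hurwitz formula
`2(g - 1) = |Δ| (2(g' - 1) + R)` with `g' ≥ 0` for every subgroup `Δ`. For `g = p + 1` and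
`|Γ| > 4p` the only admissible ramification data are `2g' + R = 7/3`, so `|Γ| = 6p` and some vertex
stabilizer `T` has order `3`. When `p > 6` and `p ≢ 1 (mod 3)`, `T` is normal, so it fixes all
`2p` vertices of its orbit, and Riemann–Hurwitz for `G → G/T` has no room for that many branch
points.

Lower bound. The dihedral group of order `4p` acts harmonically on its coset graph with respect
to `⟨sr 1⟩` and the Klein four-group `{1, r p, sr 0, sr p}`, which has `3p` vertices and `4p`
edges. The primes `p ≡ 11 (mod 12)`, infinitely many by Dirichlet, satisfy the hypothesis.
-/

section SylowArguments

variable {G : Type*} [Group G]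

theorem Sylow.normal_of_card_eq_one {q : ℕ} (P : Sylow q G) (h : Nat.card (Sylow q G) = 1) :
    (P : Subgroup G).Normal :=
  haveI := (Nat.card_eq_one_iff_unique.mp h).1
  P.normal_of_subsingleton

variable [Finite G]

theorem card_sylow_eq_one_of_dvd {q k : ℕ} [hq : Fact q.Prime]
    (hdvd : Nat.card (Sylow q G) ∣ k) (h : ∀ d, d ∣ k → d % q = 1 → d = 1) :
    Nat.card (Sylow q G) = 1 :=
  h _ hdvd (by
    have := card_sylow_modEq_one q G
    rwa [Nat.ModEq, Nat.mod_eq_of_lt hq.out.one_lt] at this)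

theorem exists_sylow_eq_of_card_eq_prime {q : ℕ} [hq : Fact q.Prime] (T : Subgroup G)
    (hT : Nat.card T = q) (hsq : ¬ q ^ 2 ∣ Nat.card G) :
    ∃ S : Sylow q G, (S : Subgroup G) = T := by
  obtain ⟨S, hTS⟩ := (IsPGroup.of_card (n := 1) (by rw [hT, pow_one])).exists_le_sylow
  refine ⟨S, (Subgroup.eq_of_le_of_card_ge hTS ?_).symm⟩
  obtain ⟨k, hk⟩ := S.isPGroup'.exists_card_eq
  have hk1 : k < 2 := by
    by_contra! hk2
    exact hsq ((pow_dvd_pow q hk2).trans (hk ▸ Subgroup.card_subgroup_dvd_card _))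
  interval_cases k <;> simp_all

theorem exists_normal_card_eq_prime {p : ℕ} (hp : p.Prime) (hp6 : 6 < p)
    (hcard : Nat.card G = 6 * p) : ∃ P : Subgroup G, P.Normal ∧ Nat.card P = p := by
  have := Fact.mk hp
  obtain ⟨g, hg⟩ := exists_prime_orderOf_dvd_card' (G := G) p ⟨6, by rw [hcard, mul_comm]⟩
  obtain ⟨P, hP⟩ := exists_sylow_eq_of_card_eq_prime (Subgroup.zpowers g)
    (by rw [Nat.card_zpowers, hg]) (by
      rw [hcard, sq]
      exact fun h => absurd (Nat.le_of_dvd (by norm_num) (Nat.dvd_of_mul_dvd_mul_right hp.pos h))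
        (by omega))
  have hPcard : Nat.card (P : Subgroup G) = p := by rw [hP, Nat.card_zpowers, hg]
  have hindex : (P : Subgroup G).index = 6 := by
    have h := (P : Subgroup G).card_mul_index
    rw [hPcard, hcard, mul_comm 6] at h
    exact Nat.eq_of_mul_eq_mul_left hp.pos h
  refine ⟨P, P.normal_of_card_eq_one (card_sylow_eq_one_of_dvd (hindex ▸ P.card_dvd_index)
    fun d hd hdp => ?_), hPcard⟩
  rwa [Nat.mod_eq_of_lt ((Nat.le_of_dvd (by norm_num) hd).trans_lt hp6)] at hdp

theorem exists_le_index_eq_two {p : ℕ} (hp : p.Prime) (hp6 : 6 < p) (hp3 : p % 3 = 2)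
    (hcard : Nat.card G = 6 * p) (T : Subgroup G) (hT : Nat.card T = 3) :
    ∃ H : Subgroup G, T ≤ H ∧ H.index = 2 := by
  obtain ⟨P, hPn, hP⟩ := exists_normal_card_eq_prime hp hp6 hcard
  set π := QuotientGroup.mk' P
  have hQ : Nat.card (G ⧸ P) = 6 := by
    have h := P.card_mul_index
    rw [hP, hcard, mul_comm 6] at h
    exact Nat.eq_of_mul_eq_mul_left hp.pos h
  have hTπ : Nat.card (T.map π) = 3 := by
    rcases (Nat.dvd_prime (by norm_num)).mp (hT ▸ T.card_map_dvd π) with h | h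
    · refine absurd (hT ▸ hP ▸ Subgroup.card_dvd_of_le ?_) (by omega : ¬ 3 ∣ p)
      rw [← QuotientGroup.ker_mk' P, ← Subgroup.map_eq_bot_iff, ← Subgroup.card_eq_one, h]
    · exact h
  refine ⟨(T.map π).comap π, Subgroup.le_comap_map π T, ?_⟩
  rw [Subgroup.index_comap_of_surjective _ (QuotientGroup.mk'_surjective P)]
  have h := (T.map π).card_mul_index
  rw [hTπ, hQ] at h
  omega

theorem le_normalizer_of_card_eq_three_mul {p : ℕ} (hp : p.Prime) (hp3 : p % 3 = 2)
    {T H : Subgroup G} (hTH : T ≤ H) (hT : Nat.card T = 3) (hH : Nat.card H = 3 * p) :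
    H ≤ Subgroup.normalizer (T : Set G) := by
  have : Fact (Nat.Prime 3) := ⟨by norm_num⟩
  have hTH' : Nat.card (T.subgroupOf H) = 3 := by
    rw [Nat.card_congr (Subgroup.subgroupOfEquivOfLe hTH).toEquiv, hT]
  obtain ⟨S, hS⟩ := exists_sylow_eq_of_card_eq_prime (T.subgroupOf H) hTH' (by
    rw [hH, sq]
    exact fun h => absurd (Nat.dvd_of_mul_dvd_mul_left (by norm_num) h) (by omega))
  have hindex : (S : Subgroup H).index = p := by
    have h := (S : Subgroup H).card_mul_index
    rw [hS, hTH', hH] at h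
    rw [hS]
    omega
  refine (Subgroup.normal_subgroupOf_iff_le_normalizer hTH).mp (hS ▸ S.normal_of_card_eq_one
    (card_sylow_eq_one_of_dvd (hindex ▸ S.card_dvd_index) fun d hd hd3 => ?_))
  rcases (Nat.dvd_prime hp).mp hd with h | h <;> omega

/-- `T` normalizes a subgroup `H ⊇ T` of index `2` (of order `3p` with `p ≢ 1 (mod 3)`, so `T` is
its only Sylow `3`-subgroup); hence `T` has at most two conjugates, i.e. one. -/
theorem Subgroup.normal_of_card_eq_three {p : ℕ} (hp : p.Prime) (hp6 : 6 < p) (hp3 : p % 3 = 2)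
    (hcard : Nat.card G = 6 * p) (T : Subgroup G) (hT : Nat.card T = 3) : T.Normal := by
  have : Fact (Nat.Prime 3) := ⟨by norm_num⟩
  obtain ⟨H, hTH, hH2⟩ := exists_le_index_eq_two hp hp6 hp3 hcard T hT
  have hH : Nat.card H = 3 * p := by
    have h := H.card_mul_index
    rw [hH2, hcard] at h
    omega
  obtain ⟨S, rfl⟩ := exists_sylow_eq_of_card_eq_prime T hT (by rw [hcard]; omega)
  refine S.normal_of_card_eq_one (card_sylow_eq_one_of_dvd (k := 2) ?_ fun d hd hd3 => ?_)
  · rw [Sylow.card_eq_index_normalizer S, ← hH2]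
    exact Subgroup.index_dvd_of_le (le_normalizer_of_card_eq_three_mul hp hp3 hTH hT hH)
  · have := Nat.le_of_dvd (by norm_num) hd
    interval_cases d <;> omega

end SylowArguments

section PermRepresentation

variable {H α : Type*} [Group H] (f : H →* Equiv.Perm α)

theorem card_orbit_mul_card_stabilizer_perm (x : α) :
    Nat.card {y // ∃ h, f h x = y} * Nat.card {h // f h x = x} = Nat.card H := by
  let := MulAction.compHom α f
  rw [← (MulAction.stabilizer H x).card_mul_index, MulAction.index_stabilizer, mul_comm,
    ← Nat.card_coe_set_eq]
  rfl

theorem card_fiber_eq_card_orbit {S : Setoid α} (hS : ∀ a b, S a b ↔ ∃ h, f h a = b)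
    (q : Quotient S) :
    Nat.card {a // Quotient.mk S a = q} = Nat.card {y // ∃ h, f h q.out = y} := by
  refine Nat.card_congr (Equiv.subtypeEquivRight fun a => ?_)
  rw [← Quotient.out_eq q, Quotient.eq, Quotient.out_eq, hS]
  constructor <;> rintro ⟨h, hh⟩ <;> exact ⟨h⁻¹, by simp [← hh]⟩

theorem card_eq_card_mul_card_quotient_of_free [Finite α] {S : Setoid α}
    (hS : ∀ a b, S a b ↔ ∃ h, f h a = b) (hfree : ∀ h a, f h a = a → h = 1) :
    Nat.card α = Nat.card H * Nat.card (Quotient S) := by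
  have : Fintype (Quotient S) := Fintype.ofFinite _
  have hfiber (q : Quotient S) : Nat.card {a // Quotient.mk S a = q} = Nat.card H := by
    have hstab : Nat.card {h // f h q.out = q.out} = 1 :=
      Nat.card_eq_one_iff_unique.mpr ⟨⟨fun a b => Subtype.ext ((hfree _ _ a.2).trans
        (hfree _ _ b.2).symm)⟩, ⟨⟨1, by simp⟩⟩⟩
    rw [card_fiber_eq_card_orbit f hS, ← card_orbit_mul_card_stabilizer_perm f q.out, hstab,
      mul_one]
  rw [← Nat.card_congr (Equiv.sigmaFiberEquiv (Quotient.mk S)), Nat.card_sigma]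
  simp [hfiber, mul_comm]

theorem card_dvd_card_of_free [Finite α] (hfree : ∀ h a, f h a = a → h = 1) :
    Nat.card H ∣ Nat.card α := by
  let := MulAction.compHom α f
  refine ⟨_, card_eq_card_mul_card_quotient_of_free f (S := MulAction.orbitRel H α)
    (fun a b => ?_) hfree⟩
  constructor <;> rintro ⟨h, rfl⟩ <;> exact ⟨h⁻¹, by simp [MulAction.compHom_smul_def]⟩

def restrictPerm {p : α → Prop} (hp : ∀ h a, p (f h a) ↔ p a) : H →* Equiv.Perm {a // p a} where
  toFun h := (f h).subtypePerm (hp h)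
  map_one' := by ext; simp
  map_mul' _ _ := by ext; simp; rfl

@[simp]
theorem restrictPerm_apply_coe {p : α → Prop} (hp : ∀ h a, p (f h a) ↔ p a) (h : H)
    (a : {a // p a}) : (restrictPerm f hp h a : α) = f h a :=
  rfl

end PermRepresentation

section RamificationArithmetic

/-- The summand of `GraphAction.ram` at a vertex `y` with `r_y = r` and `w_y = w`. -/
def ramTerm (r w : ℕ) : ℚ := 2 * (1 - 1 / (r : ℚ)) + w

theorem ramTerm_cases {r : ℕ} (w : ℕ) (hr : 1 ≤ r) :
    ramTerm r w = 0 ∨ ramTerm r w = 1 ∨ (r = 3 ∧ ramTerm r w = 4 / 3) ∨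
      (r = 3 ∧ ramTerm r w = 7 / 3) ∨ (3 / 2 ≤ ramTerm r w ∧ ramTerm r w ≤ 2) ∨
      5 / 2 ≤ ramTerm r w := by
  have hinv : 1 / (r : ℚ) ≤ 1 := div_le_one_of_le₀ (by exact_mod_cast hr) (by positivity)
  rcases (by omega : r ≤ 3 ∧ w ≤ 2 ∨ 4 ≤ r ∧ w = 0 ∨ 4 ≤ r ∧ 1 ≤ w ∨ 3 ≤ w) with
    ⟨hr3, hw2⟩ | ⟨hr4, rfl⟩ | ⟨hr4, hw1⟩ | hw3
  · interval_cases r <;> interval_cases w <;> norm_num [ramTerm]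
  · have : 1 / (r : ℚ) ≤ 1 / 4 := one_div_le_one_div_of_le (by norm_num) (by exact_mod_cast hr4)
    refine Or.inr (Or.inr (Or.inr (Or.inr (Or.inl ⟨?_, ?_⟩)))) <;> simp only [ramTerm] <;>
      push_cast <;> linarith [show 0 < 1 / (r : ℚ) by positivity]
  · have : 1 / (r : ℚ) ≤ 1 / 4 := one_div_le_one_div_of_le (by norm_num) (by exact_mod_cast hr4)
    have : (1 : ℚ) ≤ w := by exact_mod_cast hw1
    exact Or.inr (Or.inr (Or.inr (Or.inr (Or.inr (by simp only [ramTerm]; linarith)))))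
  · have : (3 : ℚ) ≤ w := by exact_mod_cast hw3
    exact Or.inr (Or.inr (Or.inr (Or.inr (Or.inr (by simp only [ramTerm]; linarith)))))

theorem ramTerm_nonneg {r : ℕ} (w : ℕ) (hr : 1 ≤ r) : 0 ≤ ramTerm r w := by
  rcases ramTerm_cases w hr with h | h | ⟨-, h⟩ | ⟨-, h⟩ | ⟨h, -⟩ | h <;> linarith

/-- The only way to write a number in `(2, 5/2)` as `2k` plus a sum of ramification terms is
`7/3 = 2(1 - 1/3) + 1` or `7/3 = 1 + 2(1 - 1/3)`. -/
theorem sum_ramTerm_eq_seven_thirds {ι : Type*} [Fintype ι] (r w : ι → ℕ) (k : ℕ)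
    (hr : ∀ i, 1 ≤ r i) (hlo : 2 < 2 * k + ∑ i, ramTerm (r i) (w i))
    (hhi : 2 * k + ∑ i, ramTerm (r i) (w i) < 5 / 2) :
    2 * k + ∑ i, ramTerm (r i) (w i) = 7 / 3 ∧ ∃ i, r i = 3 := by
  have hcases := fun i => ramTerm_cases (w i) (hr i)
  have hone : ∀ i, ramTerm (r i) (w i) ≠ 0 → 1 ≤ ramTerm (r i) (w i) := fun i hi => by
    rcases hcases i with h | h | ⟨-, h⟩ | ⟨-, h⟩ | ⟨h, -⟩ | h <;>
      first | exact absurd h hi | linarith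
  set s := Finset.univ.filter fun i => ramTerm (r i) (w i) ≠ 0
  have hsum : ∑ i ∈ s, ramTerm (r i) (w i) = ∑ i, ramTerm (r i) (w i) :=
    Finset.sum_filter_ne_zero _
  have hcard : (s.card : ℚ) ≤ ∑ i ∈ s, ramTerm (r i) (w i) := by
    simpa using Finset.card_nsmul_le_sum s _ 1 fun i hi => hone i (Finset.mem_filter.mp hi).2
  have hsk : s.card + 2 * k ≤ 2 := by
    have : ((s.card + 2 * k : ℕ) : ℚ) < 3 := by push_cast; linarith
    exact Nat.lt_succ_iff.mp (by exact_mod_cast this)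
  rw [← hsum] at hlo hhi ⊢
  obtain hs | ⟨hs, rfl⟩ | ⟨hs, rfl⟩ : s.card = 0 ∨ (s.card = 1 ∧ k = 0) ∨ (s.card = 2 ∧ k = 0) := by
    omega
  · rw [Finset.card_eq_zero.mp hs, Finset.sum_empty] at hlo
    have : ((2 : ℕ) : ℚ) < 2 * k := by push_cast; linarith
    have : 2 < 2 * k := by exact_mod_cast this
    omega
  · obtain ⟨i, hi⟩ := Finset.card_eq_one.mp hs
    rw [hi, Finset.sum_singleton] at hlo hhi ⊢
    push_cast at hlo hhi ⊢
    rcases hcases i with h | h | ⟨-, h⟩ | ⟨hri, h⟩ | ⟨-, h⟩ | h <;>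
      first | exact ⟨by linarith, i, hri⟩ | (exfalso; linarith)
  · obtain ⟨i, j, hij, hs⟩ := Finset.card_eq_two.mp hs
    have hi := hone i (Finset.mem_filter.mp (by simp [hs] : i ∈ s)).2
    have hj := hone j (Finset.mem_filter.mp (by simp [hs] : j ∈ s)).2
    rw [hs, Finset.sum_pair hij] at hlo hhi ⊢
    push_cast at hlo hhi ⊢
    rcases hcases i with h | h | ⟨hri, h⟩ | ⟨hri, h⟩ | ⟨h, -⟩ | h <;>
    rcases hcases j with h' | h' | ⟨hrj, h'⟩ | ⟨hrj, h'⟩ | ⟨h', -⟩ | h' <;>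
      first | (exfalso; linarith) | exact ⟨by linarith, i, hri⟩ | exact ⟨by linarith, j, hrj⟩

end RamificationArithmetic

namespace Multigraph

variable (G : Multigraph)

theorem ne_of_ends_eq {e : G.E} {a b : G.V} (h : G.ends e = s(a, b)) : a ≠ b :=
  fun hab => G.loopless e (by rw [h, hab]; rfl)

theorem exists_ends_eq (e : G.E) : ∃ a b, a ≠ b ∧ G.ends e = s(a, b) := by
  induction h : G.ends e using Sym2.inductionOn with
  | hf a b => exact ⟨a, b, G.ne_of_ends_eq h, rfl⟩

theorem card_mem_ends (e : G.E) : Nat.card {x // x ∈ G.ends e} = 2 := by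
  obtain ⟨a, b, hab, he⟩ := G.exists_ends_eq e
  rw [← Set.ncard_pair hab, ← Nat.card_coe_set_eq]
  exact Nat.card_congr (Equiv.subtypeEquivRight fun x => by simp [he])

theorem sum_card_incident (P : G.E → Prop) :
    ∑ x, Nat.card {e // x ∈ G.ends e ∧ P e} = 2 * Nat.card {e // P e} := by
  simp only [Nat.card_eq_fintype_card, Fintype.card_subtype, Finset.card_filter]
  rw [Finset.sum_comm, Finset.mul_sum]
  refine Finset.sum_congr rfl fun e _ => ?_
  by_cases he : P e
  · simp [he, ← Fintype.card_subtype, ← Nat.card_eq_fintype_card, card_mem_ends]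
  · simp [he]

theorem exists_ends_of_adj {a b : G.V}
    (h : (SimpleGraph.fromRel fun x y : G.V => ∃ e, G.ends e = s(x, y)).Adj a b) :
    ∃ e, G.ends e = s(a, b) := by
  rcases ((SimpleGraph.fromRel_adj _ _ _).mp h).2 with h | ⟨e, he⟩
  · exact h
  · exact ⟨e, he.trans Sym2.eq_swap⟩

theorem forall_of_edge_closed {S : G.V → Prop} {x : G.V} (hx : S x)
    (hS : ∀ e a b, G.ends e = s(a, b) → S a → S b) (z : G.V) : S z := by
  obtain ⟨w⟩ := G.connected.preconnected x z
  induction w with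
  | nil => exact hx
  | cons h _ ih =>
    obtain ⟨e, he⟩ := G.exists_ends_of_adj h
    exact ih (hS e _ _ he hx)

end Multigraph

namespace GraphAction

variable {Γ : Type} [Group Γ] {G : Multigraph}

theorem finite (A : GraphAction Γ G) : Finite Γ := by
  refine Finite.of_injective (fun γ => (A.actV γ, A.actE γ)) fun γ δ h => ?_
  simp only [Prod.mk.injEq] at h
  refine (inv_mul_eq_one.mp (A.faithful _ (fun x => ?_) fun e => ?_)).symm
  · rw [map_mul, map_inv, h.1, inv_mul_cancel, Equiv.Perm.one_apply]
  · rw [map_mul, map_inv, h.2, inv_mul_cancel, Equiv.Perm.one_apply]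

variable (A : GraphAction Γ G)

@[simp]
theorem actV_inv_apply_apply (γ : Γ) (x : G.V) : A.actV γ⁻¹ (A.actV γ x) = x := by
  simp [map_inv]

@[simp]
theorem actE_inv_apply_apply (γ : Γ) (e : G.E) : A.actE γ⁻¹ (A.actE γ e) = e := by
  simp [map_inv]

theorem mem_ends_act_iff {γ : Γ} {x : G.V} {e : G.E} :
    A.actV γ x ∈ G.ends (A.actE γ e) ↔ x ∈ G.ends e := by
  simp [A.ends_map, Sym2.mem_map]

def stabilizer (x : G.V) : Subgroup Γ :=
  (MulAction.stabilizer (Equiv.Perm G.V) x).comap A.actV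

@[simp]
theorem mem_stabilizer_iff {x : G.V} {γ : Γ} : γ ∈ A.stabilizer x ↔ A.actV γ x = x :=
  MulAction.mem_stabilizer_iff

theorem not_vertical_of_forall_fixed {Δ : Subgroup Γ} {x : G.V}
    (hx : ∀ δ ∈ Δ, A.actV δ x = x) {f : G.E} (hf : x ∈ G.ends f) : ¬ A.Vertical Δ f := by
  rintro ⟨a, b, hab, δ, hδ, rfl⟩
  refine G.ne_of_ends_eq hab ?_
  rw [hab, Sym2.mem_iff] at hf
  rcases hf with rfl | rfl
  · rw [hx δ hδ]
  · exact ((A.actV δ).injective (hx δ hδ)).symm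

/-- Harmonicity of `G → G/⟨γ⟩` at a vertex `x` fixed by `γ`: the edge `e` is alone in its
`⟨γ⟩`-orbit among the edges at `x`, hence so is every other edge at `x`. -/
theorem actE_eq_self_of_fixes {γ : Γ} (hh : A.QuotHarmonic (Subgroup.zpowers γ)) {x : G.V}
    {e : G.E} (hx : A.actV γ x = x) (he : x ∈ G.ends e) (hfe : A.actE γ e = e) {f : G.E}
    (hf : x ∈ G.ends f) : A.actE γ f = f := by
  set Δ := Subgroup.zpowers γ
  have hΔx : ∀ δ ∈ Δ, A.actV δ x = x := fun δ hδ =>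
    (A.mem_stabilizer_iff).mp (Subgroup.zpowers_le.mpr ((A.mem_stabilizer_iff).mpr hx) hδ)
  have hΔe : ∀ δ ∈ Δ, A.actE δ e = e := by
    rintro _ ⟨k, rfl⟩
    rw [map_zpow]
    exact Function.IsFixedPt.perm_zpow hfe k
  have hcard := hh x f e (A.not_vertical_of_forall_fixed hΔx hf)
    (A.not_vertical_of_forall_fixed hΔx he) ⟨x, hf, 1, Δ.one_mem, by simp⟩
    ⟨x, he, 1, Δ.one_mem, by simp⟩
  have horbit_e : ∀ e', A.erel Δ e' e → e' = e := by
    rintro e' ⟨δ, hδ, hδe⟩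
    rw [← A.actE_inv_apply_apply δ e', hδe, hΔe _ (Δ.inv_mem hδ)]
  have : Subsingleton {e' // x ∈ G.ends e' ∧ A.erel Δ e' e} :=
    ⟨fun e₁ e₂ => Subtype.ext ((horbit_e _ e₁.2.2).trans (horbit_e _ e₂.2.2).symm)⟩
  have : Subsingleton {e' // x ∈ G.ends e' ∧ A.erel Δ e' f} := by
    rw [← Finite.card_le_one_iff_subsingleton, hcard, Finite.card_le_one_iff_subsingleton]
    infer_instance
  have hγf : x ∈ G.ends (A.actE γ f) := by rwa [← hx, A.mem_ends_act_iff]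
  exact congrArg Subtype.val (Subsingleton.elim (α := {e' // x ∈ G.ends e' ∧ A.erel Δ e' f})
    ⟨_, hγf, γ⁻¹, Δ.inv_mem (Subgroup.mem_zpowers γ), by simp⟩ ⟨f, hf, 1, Δ.one_mem, by simp⟩)

/-- By `actE_eq_self_of_fixes`, the vertices fixed by `γ` together with all their edges form a
set closed under adjacency. -/
theorem eq_one_of_fixes (hh : A.ActsHarmonically) {γ : Γ} {x : G.V} {e : G.E}
    (hx : A.actV γ x = x) (he : x ∈ G.ends e) (hfe : A.actE γ e = e) : γ = 1 := by
  have hall := G.forall_of_edge_closed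
    (S := fun z => A.actV γ z = z ∧ ∀ f, z ∈ G.ends f → A.actE γ f = f)
    ⟨hx, fun f hf => A.actE_eq_self_of_fixes (hh _).1 hx he hfe hf⟩ fun f a b hab ⟨ha, hfa⟩ => by
      have haf : a ∈ G.ends f := by rw [hab]; exact Sym2.mem_mk_left a b
      have hbf : b ∈ G.ends f := by rw [hab]; exact Sym2.mem_mk_right a b
      have hγb : A.actV γ b = b := by
        have := (A.mem_ends_act_iff (γ := γ)).mpr hbf
        rw [hfa f haf, hab, Sym2.mem_iff, ← ha] at this
        exact this.resolve_left fun h => G.ne_of_ends_eq hab ((A.actV γ).injective h).symm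
      exact ⟨hγb, fun f' hf' => A.actE_eq_self_of_fixes (hh _).1 hγb hbf (hfa f haf) hf'⟩
  exact A.faithful γ (fun z => (hall z).1) fun f => (hall _).2 f (Sym2.out_fst_mem _)

theorem mem_stabilizer_act_of_normal {x : G.V} (hN : (A.stabilizer x).Normal) {δ : Γ}
    (hδ : δ ∈ A.stabilizer x) (γ : Γ) : δ ∈ A.stabilizer (A.actV γ x) := by
  have h := (A.mem_stabilizer_iff).mp (hN.conj_mem δ hδ γ⁻¹)
  simp only [inv_inv, map_mul, map_inv, Equiv.Perm.mul_apply, Equiv.Perm.inv_def,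
    Equiv.symm_apply_eq] at h
  exact (A.mem_stabilizer_iff).mpr h

section Quotient

variable (Δ : Subgroup Γ)

theorem vertical_act_iff {δ : Γ} (hδ : δ ∈ Δ) {e : G.E} :
    A.Vertical Δ (A.actE δ e) ↔ A.Vertical Δ e := by
  suffices ∀ δ ∈ Δ, ∀ e, A.Vertical Δ e → A.Vertical Δ (A.actE δ e) from
    ⟨fun h => by simpa using this δ⁻¹ (Δ.inv_mem hδ) _ h, this δ hδ e⟩
  rintro δ hδ e ⟨a, b, hab, δ', hδ', rfl⟩
  refine ⟨A.actV δ a, A.actV δ (A.actV δ' a), by rw [A.ends_map, hab, Sym2.map_mk],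
    δ * δ' * δ⁻¹, Δ.mul_mem (Δ.mul_mem hδ hδ') (Δ.inv_mem hδ), ?_⟩
  simp [map_mul, map_inv]

noncomputable instance : Fintype (A.quotV Δ) := Fintype.ofFinite _

theorem vrel_iff_exists {x y : G.V} :
    A.vrel Δ x y ↔ ∃ d : Δ, A.actV.comp Δ.subtype d x = y := by
  simp [vrel]

noncomputable def fiberCard (y : A.quotV Δ) : ℕ :=
  Nat.card {x // Quotient.mk (A.vSetoid Δ) x = y}

theorem stabOrder_eq_card (x : G.V) : A.stabOrder Δ x = Nat.card ↥(Δ ⊓ A.stabilizer x) :=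
  Nat.card_congr (Equiv.subtypeEquivRight fun γ => by simp)

theorem fiberCard_mul_r (y : A.quotV Δ) : A.fiberCard Δ y * A.r Δ y = Nat.card Δ := by
  rw [fiberCard, card_fiber_eq_card_orbit _ fun _ _ => A.vrel_iff_exists Δ,
    ← card_orbit_mul_card_stabilizer_perm (A.actV.comp Δ.subtype) (Quotient.out y), r, stabOrder]
  congr 1
  exact Nat.card_congr (Equiv.subtypeSubtypeEquivSubtypeInter (· ∈ Δ) _).symm

theorem card_V_eq_sum_fiberCard : Nat.card G.V = ∑ y, A.fiberCard Δ y := by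
  rw [← Nat.card_congr (Equiv.sigmaFiberEquiv (Quotient.mk (A.vSetoid Δ))), Nat.card_sigma]
  rfl

theorem card_nonvertical (hh : A.ActsHarmonically) :
    Nat.card {e // ¬ A.Vertical Δ e} = Nat.card Δ * Nat.card (A.quotE Δ) := by
  refine card_eq_card_mul_card_quotient_of_free (restrictPerm (A.actE.comp Δ.subtype)
    (p := fun e => ¬ A.Vertical Δ e) fun d e => not_congr (A.vertical_act_iff Δ d.2))
    (fun a b => ?_) fun d e hde => ?_
  · show A.erel Δ a b ↔ _
    simp [erel, Subtype.ext_iff]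
  · have hde : A.actE d e = e := congrArg Subtype.val hde
    obtain ⟨a, b, -, hab⟩ := G.exists_ends_eq e
    have hmap : s(A.actV d a, A.actV d b) = s(a, b) := by
      rw [← Sym2.map_mk, ← hab, ← A.ends_map, hde]
    rcases Sym2.eq_iff.mp hmap with ⟨ha, -⟩ | ⟨hb, -⟩
    · exact Subtype.ext (A.eq_one_of_fixes hh ha (by rw [hab]; exact Sym2.mem_mk_left a b) hde)
    · exact absurd ⟨a, b, hab, d, d.2, hb⟩ e.2

theorem vertMult_act {δ : Γ} (hδ : δ ∈ Δ) (x : G.V) :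
    A.vertMult Δ (A.actV δ x) = A.vertMult Δ x :=
  (Nat.card_congr (Equiv.subtypeEquiv (A.actE δ) fun e => by
    rw [A.mem_ends_act_iff, A.vertical_act_iff Δ hδ])).symm

theorem vertMult_out_mk (x : G.V) :
    A.vertMult Δ (Quotient.out (Quotient.mk (A.vSetoid Δ) x)) = A.vertMult Δ x := by
  obtain ⟨δ, hδ, hx⟩ := Quotient.exact (Quotient.out_eq (Quotient.mk (A.vSetoid Δ) x))
  exact (A.vertMult_act Δ hδ _).symm.trans (congrArg _ hx)

theorem two_mul_card_vertical :
    2 * Nat.card {e // A.Vertical Δ e} = ∑ y, A.fiberCard Δ y * A.vertMult Δ (Quotient.out y) := by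
  rw [← G.sum_card_incident, ← Fintype.sum_fiberwise (Quotient.mk (A.vSetoid Δ))]
  refine Finset.sum_congr rfl fun y _ => ?_
  rw [fiberCard, Nat.card_eq_fintype_card, ← smul_eq_mul, ← Finset.card_univ, ← Finset.sum_const]
  refine Finset.sum_congr rfl fun x _ => ?_
  obtain ⟨x, rfl⟩ := x
  exact (A.vertMult_out_mk Δ x).symm

/-- The stabilizer of `x` in `Δ` acts freely on the `Δ`-vertical edges at `x`, by rigidity. -/
theorem stabOrder_dvd_vertMult (hh : A.ActsHarmonically) (x : G.V) :
    A.stabOrder Δ x ∣ A.vertMult Δ x := by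
  rw [stabOrder_eq_card]
  refine card_dvd_card_of_free (restrictPerm (A.actE.comp (Δ ⊓ A.stabilizer x).subtype)
    (p := fun e => x ∈ G.ends e ∧ A.Vertical Δ e) fun d e => ?_) fun d e hde => ?_
  · have hd := Subgroup.mem_inf.mp d.2
    have hmem := A.mem_ends_act_iff (γ := d) (x := x) (e := e)
    rw [(A.mem_stabilizer_iff).mp hd.2] at hmem
    exact and_congr hmem (A.vertical_act_iff Δ hd.1)
  · exact Subtype.ext (A.eq_one_of_fixes hh ((A.mem_stabilizer_iff).mp
      (Subgroup.mem_inf.mp d.2).2) e.2.1 (congrArg Subtype.val hde))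

noncomputable def quotEnds : A.quotE Δ → Sym2 (A.quotV Δ) :=
  Quotient.lift (fun e : {e // ¬ A.Vertical Δ e} => (G.ends e).map (Quotient.mk (A.vSetoid Δ)))
    fun e f ⟨δ, hδ, hef⟩ => by
      rw [← hef, A.ends_map, Sym2.map_map]
      exact congrArg (Sym2.map · (G.ends e)) (funext fun x => Quotient.sound ⟨δ, hδ, rfl⟩)

noncomputable def quotGraph : SimpleGraph (A.quotV Δ) :=
  SimpleGraph.fromRel fun a b => ∃ q, A.quotEnds Δ q = s(a, b)

theorem quotGraph_connected : (A.quotGraph Δ).Connected := by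
  have : Nonempty G.V := G.connected.nonempty
  set x₀ : G.V := Classical.arbitrary G.V
  have hreach := G.forall_of_edge_closed
    (S := fun z => (A.quotGraph Δ).Reachable (Quotient.mk _ x₀) (Quotient.mk _ z))
    (SimpleGraph.Reachable.refl _) fun e a b hab ha => by
      by_cases hcls : Quotient.mk (A.vSetoid Δ) a = Quotient.mk (A.vSetoid Δ) b
      · rwa [← hcls]
      have hnv : ¬ A.Vertical Δ e := by
        rintro ⟨a', b', hab', hrel⟩
        rw [hab] at hab'
        rcases Sym2.eq_iff.mp hab' with ⟨rfl, rfl⟩ | ⟨rfl, rfl⟩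
        · exact hcls (Quotient.sound hrel)
        · exact hcls (Quotient.sound hrel).symm
      refine ha.trans (SimpleGraph.Adj.reachable ⟨hcls, Or.inl ⟨Quotient.mk _ ⟨e, hnv⟩, ?_⟩⟩)
      simp [quotEnds, hab]
  rw [SimpleGraph.connected_iff]
  refine ⟨fun a b => ?_, ⟨Quotient.mk _ x₀⟩⟩
  obtain ⟨x, rfl⟩ := Quotient.exists_rep a
  obtain ⟨z, rfl⟩ := Quotient.exists_rep b
  exact (hreach x).symm.trans (hreach z)

theorem quotGenus_nonneg : 0 ≤ A.quotGenus Δ := by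
  have hedges : Nat.card (A.quotGraph Δ).edgeSet ≤ Nat.card (A.quotE Δ) := by
    refine (Nat.card_mono (Set.finite_range _) fun s hs => ?_).trans
      (Finite.card_range_le (A.quotEnds Δ))
    induction s using Sym2.inductionOn with
    | hf a b =>
      rcases hs with ⟨-, ⟨q, hq⟩ | ⟨q, hq⟩⟩
      · exact ⟨q, hq⟩
      · exact ⟨q, hq.trans Sym2.eq_swap⟩
  have := (A.quotGraph_connected Δ).card_vert_le_card_edgeSet_add_one
  rw [quotGenus]
  omega

theorem r_pos (y : A.quotV Δ) : 0 < A.r Δ y := by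
  have := A.finite
  have : Nonempty {γ // γ ∈ Δ ∧ A.actV γ (Quotient.out y) = Quotient.out y} :=
    ⟨⟨1, Δ.one_mem, by simp⟩⟩
  exact Nat.card_pos

theorem ram_eq_sum_ramTerm : A.ram Δ = ∑ y, ramTerm (A.r Δ y) (A.w Δ y) :=
  finsum_eq_sum_of_fintype _

theorem card_V_eq_sum_div_r : (Nat.card G.V : ℚ) = ∑ y, (Nat.card Δ : ℚ) / A.r Δ y := by
  rw [A.card_V_eq_sum_fiberCard Δ, Nat.cast_sum]
  refine Finset.sum_congr rfl fun y _ => ?_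
  rw [eq_div_iff (Nat.cast_ne_zero.mpr (A.r_pos Δ y).ne'), ← Nat.cast_mul, A.fiberCard_mul_r]

theorem two_mul_card_vertical_eq_sum_w (hh : A.ActsHarmonically) :
    2 * (Nat.card {e // A.Vertical Δ e} : ℚ) = Nat.card Δ * ∑ y, (A.w Δ y : ℚ) := by
  rw [← Nat.cast_ofNat, ← Nat.cast_mul, A.two_mul_card_vertical, Nat.cast_sum, Finset.mul_sum]
  refine Finset.sum_congr rfl fun y _ => ?_
  have hr : (A.r Δ y : ℚ) ≠ 0 := Nat.cast_ne_zero.mpr (A.r_pos Δ y).ne'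
  have hdvd : A.r Δ y ∣ A.vertMult Δ (Quotient.out y) := A.stabOrder_dvd_vertMult Δ hh _
  rw [w, Nat.cast_div hdvd hr, Nat.cast_mul,
    ← A.fiberCard_mul_r Δ y, Nat.cast_mul]
  field_simp

theorem card_E_eq (hh : A.ActsHarmonically) :
    Nat.card G.E = Nat.card {e // A.Vertical Δ e} + Nat.card Δ * Nat.card (A.quotE Δ) := by
  rw [← Nat.card_congr (Equiv.sumCompl (A.Vertical Δ)), Nat.card_sum, A.card_nonvertical Δ hh]

theorem riemann_hurwitz (hh : A.ActsHarmonically) :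
    2 * ((G.genus : ℚ) - 1) = Nat.card Δ * (2 * ((A.quotGenus Δ : ℚ) - 1) + A.ram Δ) := by
  have hterm (y : A.quotV Δ) : (Nat.card Δ : ℚ) * ramTerm (A.r Δ y) (A.w Δ y) =
      2 * Nat.card Δ * 1 + Nat.card Δ * A.w Δ y - 2 * (Nat.card Δ / A.r Δ y) := by
    rw [ramTerm]
    ring
  have hV' : (Nat.card (A.quotV Δ) : ℚ) = ∑ _y : A.quotV Δ, 1 := by simp
  rw [ram_eq_sum_ramTerm, mul_add, Finset.mul_sum, Finset.sum_congr rfl fun y _ => hterm y,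
    Finset.sum_sub_distrib, Finset.sum_add_distrib, ← Finset.mul_sum, ← Finset.mul_sum,
    ← Finset.mul_sum, ← A.card_V_eq_sum_div_r, ← A.two_mul_card_vertical_eq_sum_w Δ hh, ← hV',
    Multigraph.genus, quotGenus, ← Nat.card_eq_fintype_card, ← Nat.card_eq_fintype_card,
    A.card_E_eq Δ hh]
  push_cast
  ring

theorem exists_quotGenus_eq_natCast : ∃ k : ℕ, A.quotGenus Δ = k :=
  Int.eq_ofNat_of_zero_le (A.quotGenus_nonneg Δ)

/-- Every vertex fixed by all of `Δ` is a branch point with `r = |Δ|`. -/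
theorem card_mul_le_ram_of_fixed (F : Finset G.V)
    (hF : ∀ x ∈ F, ∀ δ ∈ Δ, A.actV δ x = x) :
    F.card * (2 * (1 - 1 / (Nat.card Δ : ℚ))) ≤ A.ram Δ := by
  have := A.finite
  have hout : ∀ x ∈ F, Quotient.out (Quotient.mk (A.vSetoid Δ) x) = x := fun x hx => by
    obtain ⟨δ, hδ, h⟩ := Quotient.mk_out (s := A.vSetoid Δ) x
    exact (A.actV δ).injective (h.trans (hF x hx δ hδ).symm)
  have hinj : Set.InjOn (Quotient.mk (A.vSetoid Δ)) F := fun x hx x' hx' h => by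
    rw [← hout x hx, ← hout x' hx', h]
  have hr : ∀ x ∈ F, A.r Δ (Quotient.mk (A.vSetoid Δ) x) = Nat.card Δ := fun x hx => by
    rw [r, stabOrder_eq_card, hout x hx, inf_of_le_left fun δ hδ =>
      (A.mem_stabilizer_iff).mpr (hF x hx δ hδ)]
  rw [ram_eq_sum_ramTerm, ← Finset.card_image_of_injOn hinj, ← nsmul_eq_mul]
  refine (Finset.card_nsmul_le_sum _ _ _ fun y hy => ?_).trans
    (Finset.sum_le_sum_of_subset_of_nonneg (Finset.subset_univ _)
      fun y _ _ => ramTerm_nonneg _ (A.r_pos Δ y))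
  obtain ⟨x, hx, rfl⟩ := Finset.mem_image.mp hy
  rw [ramTerm, hr x hx]
  exact le_add_of_nonneg_right (Nat.cast_nonneg _)

end Quotient

theorem card_eq_six_mul_of_lt (hh : A.ActsHarmonically) {p : ℕ} (hp : 0 < p)
    (hgenus : G.genus = p + 1) (hlt : 4 * p < Nat.card Γ) :
    Nat.card Γ = 6 * p ∧ ∃ y : A.quotV ⊤, A.r ⊤ y = 3 := by
  have hRH := A.riemann_hurwitz ⊤ hh
  obtain ⟨k, hk⟩ := A.exists_quotGenus_eq_natCast ⊤
  rw [hgenus, hk, Subgroup.card_top, ram_eq_sum_ramTerm] at hRH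
  push_cast at hRH
  have hm : (0 : ℚ) < Nat.card Γ := by exact_mod_cast hp.trans_le (by omega)
  have hlt' : (4 * p : ℚ) < Nat.card Γ := by exact_mod_cast hlt
  have hp' : (0 : ℚ) < p := by exact_mod_cast hp
  have htotal : 2 * (k : ℚ) + ∑ y, ramTerm (A.r ⊤ y) (A.w ⊤ y) = 2 + 2 * p / Nat.card Γ := by
    have : 2 * (p : ℚ) / Nat.card Γ = 2 * k - 2 + ∑ y, ramTerm (A.r ⊤ y) (A.w ⊤ y) := by
      rw [div_eq_iff hm.ne']
      linear_combination hRH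
    linarith
  have hfrac : 2 * (p : ℚ) / Nat.card Γ < 1 / 2 := by
    rw [div_lt_iff₀ hm]
    linarith
  obtain ⟨h73, hy⟩ := sum_ramTerm_eq_seven_thirds _ _ k (fun y => A.r_pos ⊤ y)
    (by rw [htotal]; linarith [show 0 < 2 * (p : ℚ) / Nat.card Γ by positivity])
    (by rw [htotal]; linarith)
  refine ⟨?_, hy⟩
  rw [htotal] at h73
  have : (Nat.card Γ : ℚ) = 6 * p := by
    field_simp at h73
    linarith
  exact_mod_cast this

theorem card_le_four_mul (hh : A.ActsHarmonically) {p : ℕ} (hp : p.Prime) (hp6 : 6 < p)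
    (hp3 : p % 3 = 2) (hgenus : G.genus = p + 1) : Nat.card Γ ≤ 4 * p := by
  have := A.finite
  by_contra! hlt
  obtain ⟨hm, y, hy⟩ := A.card_eq_six_mul_of_lt hh hp.pos hgenus hlt
  set x₀ := Quotient.out y
  have hSt : Nat.card (A.stabilizer x₀) = 3 := by rw [← hy, r, stabOrder_eq_card, top_inf_eq]
  have hN := Subgroup.normal_of_card_eq_three hp hp6 hp3 hm _ hSt
  set F := Finset.univ.filter fun x => Quotient.mk (A.vSetoid ⊤) x = y
  have hF : F.card = 2 * p := by
    have h := A.fiberCard_mul_r ⊤ y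
    have hFy : A.fiberCard ⊤ y = F.card := by
      rw [fiberCard, Nat.card_eq_fintype_card, Fintype.card_subtype]
    rw [hy, Subgroup.card_top, hm, hFy] at h
    omega
  have hfix : ∀ x ∈ F, ∀ δ ∈ A.stabilizer x₀, A.actV δ x = x := by
    intro x hx δ hδ
    obtain ⟨γ, -, hγ⟩ := Quotient.exact ((Finset.mem_filter.mp hx).2.trans (Quotient.out_eq y).symm)
    rw [← A.actV_inv_apply_apply γ x, hγ]
    exact (A.mem_stabilizer_iff).mp (A.mem_stabilizer_act_of_normal hN hδ γ⁻¹)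
  have hram := A.card_mul_le_ram_of_fixed _ F hfix
  have hRH := A.riemann_hurwitz (A.stabilizer x₀) hh
  obtain ⟨k, hk⟩ := A.exists_quotGenus_eq_natCast (A.stabilizer x₀)
  rw [hgenus, hk, hSt] at hRH
  rw [hF, hSt] at hram
  push_cast at hRH hram
  have : (p : ℚ) ≤ 1 := by linarith [(k.cast_nonneg : (0 : ℚ) ≤ k)]
  have : p ≤ 1 := by exact_mod_cast this
  omega

end GraphAction

section CosetGraph

variable {Γ : Type} [Group Γ]

theorem card_coset_edges_eq (Δ K : Subgroup Γ) {γ e₁ δ₀ : Γ} (hδ₀ : δ₀ ∈ Δ)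
    (hk₀ : γ⁻¹ * δ₀⁻¹ * e₁ ∈ K) :
    Nat.card {e // γ⁻¹ * e ∈ K ∧ e₁ * e⁻¹ ∈ Δ} = Nat.card {t // t ∈ Δ ∧ γ⁻¹ * t * γ ∈ K} := by
  refine Nat.card_congr ⟨fun e => ⟨δ₀⁻¹ * e₁ * e.1⁻¹, ?_, ?_⟩, fun t => ⟨t.1⁻¹ * δ₀⁻¹ * e₁, ?_, ?_⟩,
    fun e => ?_, fun t => ?_⟩
  · rw [mul_assoc]
    exact Δ.mul_mem (Δ.inv_mem hδ₀) e.2.2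
  · rw [show γ⁻¹ * (δ₀⁻¹ * e₁ * e.1⁻¹) * γ = (γ⁻¹ * δ₀⁻¹ * e₁) * (γ⁻¹ * e.1)⁻¹ by group]
    exact K.mul_mem hk₀ (K.inv_mem e.2.1)
  · rw [show γ⁻¹ * (t.1⁻¹ * δ₀⁻¹ * e₁) = (γ⁻¹ * t.1 * γ)⁻¹ * (γ⁻¹ * δ₀⁻¹ * e₁) by group]
    exact K.mul_mem (K.inv_mem t.2.2) hk₀
  · rw [show e₁ * (t.1⁻¹ * δ₀⁻¹ * e₁)⁻¹ = δ₀ * t.1 by group]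
    exact Δ.mul_mem hδ₀ t.2.1
  · exact Subtype.ext (by group)
  · exact Subtype.ext (by group)

variable (Γ) [Fintype Γ] (A B : Subgroup Γ)

noncomputable abbrev cosetGraph (hgen : Subgroup.closure ((A : Set Γ) ∪ B) = ⊤) : Multigraph where
  V := (Γ ⧸ A) ⊕ (Γ ⧸ B)
  E := Γ
  ends γ := s(.inl γ, .inr γ)
  loopless e := by simp
  connected := by
    set Gs := SimpleGraph.fromRel fun x y : (Γ ⧸ A) ⊕ (Γ ⧸ B) =>
      ∃ γ : Γ, s(.inl (γ : Γ ⧸ A), .inr (γ : Γ ⧸ B)) = s(x, y)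
    have hadj (γ : Γ) : Gs.Adj (.inl γ) (.inr γ) := ⟨by simp, .inl ⟨γ, rfl⟩⟩
    have hstep (x y : Γ) (hy : y ∈ (A : Set Γ) ∪ B) :
        Gs.Reachable (.inl (x : Γ ⧸ A)) (.inl ((x * y : Γ) : Γ ⧸ A)) := by
      rcases hy with hy | hy
      · rw [QuotientGroup.eq.mpr (show (x * y)⁻¹ * x ∈ A by simpa using hy)]
      · refine (hadj x).reachable.trans (.trans ?_ (hadj (x * y)).symm.reachable)
        rw [QuotientGroup.eq.mpr (show (x * y)⁻¹ * x ∈ B by simpa using hy)]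
    have hreach (γ : Γ) : Gs.Reachable (.inl ((1 : Γ) : Γ ⧸ A)) (.inl (γ : Γ ⧸ A)) := by
      refine Subgroup.closure_induction_right
        (p := fun (γ : Γ) _ => Gs.Reachable _ (.inl (γ : Γ ⧸ A)))
        .rfl (fun x _ y hy ih => ih.trans (hstep x y hy)) (fun x _ y hy ih => ih.trans
          (hstep x y⁻¹ (hy.imp (A.inv_mem ·) (B.inv_mem ·)))) (hgen ▸ Subgroup.mem_top γ)
    have hall (v : (Γ ⧸ A) ⊕ (Γ ⧸ B)) : Gs.Reachable (.inl ((1 : Γ) : Γ ⧸ A)) v := by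
      rcases v with q | q <;> obtain ⟨γ, rfl⟩ := QuotientGroup.mk_surjective q
      · exact hreach γ
      · exact (hreach γ).trans (hadj γ).reachable
    rw [SimpleGraph.connected_iff]
    exact ⟨fun u v => (hall u).symm.trans (hall v), ⟨.inl ((1 : Γ) : Γ ⧸ A)⟩⟩

noncomputable def cosetAction (hgen : Subgroup.closure ((A : Set Γ) ∪ B) = ⊤) :
    GraphAction Γ (cosetGraph Γ A B hgen) where
  actV := (Equiv.Perm.sumCongrHom _ _).comp
    ((MulAction.toPermHom Γ (Γ ⧸ A)).prod (MulAction.toPermHom Γ (Γ ⧸ B)))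
  actE := MulAction.toPermHom Γ Γ
  ends_map _ _ := rfl
  faithful γ _ hE := (mul_one γ).symm.trans (hE (1 : Γ))

variable {Γ A B} (hgen : Subgroup.closure ((A : Set Γ) ∪ B) = ⊤)

@[simp]
theorem cosetAction_actE (δ e : Γ) : (cosetAction Γ A B hgen).actE δ e = δ * e :=
  rfl

theorem cosetGraph_genus :
    (cosetGraph Γ A B hgen).genus = (Nat.card Γ : ℤ) - A.index - B.index + 1 := by
  rw [Multigraph.genus, ← Nat.card_eq_fintype_card, ← Nat.card_eq_fintype_card]
  simp only [Nat.card_sum, Subgroup.index]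
  push_cast
  ring

theorem cosetGraph_exists_mem_ends_iff (x : (cosetGraph Γ A B hgen).V) :
    ∃ (γ : Γ) (K : Subgroup Γ), ∀ e : Γ, x ∈ (cosetGraph Γ A B hgen).ends e ↔ γ⁻¹ * e ∈ K := by
  rcases x with q | q <;> obtain ⟨γ, rfl⟩ := QuotientGroup.mk_surjective q
  · exact ⟨γ, A, fun e => by simp [Sym2.mem_iff, QuotientGroup.eq]⟩
  · exact ⟨γ, B, fun e => by simp [Sym2.mem_iff, QuotientGroup.eq]⟩

theorem cosetAction_erel_iff {Δ : Subgroup Γ} {e f : Γ} :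
    (cosetAction Γ A B hgen).erel Δ e f ↔ f * e⁻¹ ∈ Δ := by
  constructor
  · rintro ⟨δ, hδ, rfl⟩
    rwa [cosetAction_actE, mul_inv_cancel_right]
  · exact fun h => ⟨f * e⁻¹, h, by rw [cosetAction_actE, inv_mul_cancel_right]⟩

/-- At a vertex `γK`, the edges in a given `Δ`-orbit are counted by `Δ ∩ γKγ⁻¹`, whichever
orbit of edges at `γK` is chosen. -/
theorem cosetAction_actsHarmonically : (cosetAction Γ A B hgen).ActsHarmonically := by
  intro Δ
  refine ⟨fun x e₁ e₂ _ _ h₁ h₂ => ?_, fun x => ?_⟩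
  · obtain ⟨γ, K, hK⟩ := cosetGraph_exists_mem_ends_iff hgen x
    have hcount : ∀ e₁, (∃ v ∈ (cosetGraph Γ A B hgen).ends e₁,
        (cosetAction Γ A B hgen).vrel Δ x v) → Nat.card {e // x ∈ (cosetGraph Γ A B hgen).ends e ∧
          (cosetAction Γ A B hgen).erel Δ e e₁} = Nat.card {t // t ∈ Δ ∧ γ⁻¹ * t * γ ∈ K} := by
      rintro e₁ ⟨_, hv, δ, hδ, rfl⟩
      rw [← (cosetAction Γ A B hgen).mem_ends_act_iff (γ := δ⁻¹),
        GraphAction.actV_inv_apply_apply, hK, cosetAction_actE] at hv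
      rw [← card_coset_edges_eq Δ K hδ (by rwa [mul_assoc])]
      exact Nat.card_congr (Equiv.subtypeEquivRight fun e => by rw [hK, cosetAction_erel_iff])
    rw [hcount e₁ h₁, hcount e₂ h₂]
  · rcases x with q | q <;> obtain ⟨γ, rfl⟩ := QuotientGroup.mk_surjective q
    · exact ⟨γ, Sym2.mem_mk_left _ _, .inr γ, Sym2.mem_mk_right _ _,
        fun ⟨_, _, h⟩ => Sum.inl_ne_inr h⟩
    · exact ⟨γ, Sym2.mem_mk_right _ _, .inl γ, Sym2.mem_mk_left _ _,
        fun ⟨_, _, h⟩ => Sum.inr_ne_inl h⟩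

end CosetGraph

section Dihedral

open DihedralGroup

variable (p : ℕ) [NeZero p]

def dihedralKlein : Subgroup (DihedralGroup (2 * p)) := by
  have hpp : (p : ZMod (2 * p)) + p = 0 := by
    rw [← Nat.cast_add, ← two_mul, ZMod.natCast_self]
  have hneg : -(p : ZMod (2 * p)) = p := by linear_combination -hpp
  exact
  { carrier := {1, r (p : ZMod (2 * p)), sr 0, sr (p : ZMod (2 * p))}
    one_mem' := Set.mem_insert _ _
    mul_mem' := by
      intro a b ha hb
      simp only [Set.mem_insert_iff, Set.mem_singleton_iff] at ha hb ⊢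
      rcases ha with rfl | rfl | rfl | rfl <;> rcases hb with rfl | rfl | rfl | rfl <;>
        simp [r_mul_r, r_mul_sr, sr_mul_r, sr_mul_sr, hpp, hneg]
    inv_mem' := by
      intro a ha
      simp only [Set.mem_insert_iff, Set.mem_singleton_iff] at ha ⊢
      rcases ha with rfl | rfl | rfl | rfl <;> simp [hneg] }

theorem card_dihedralKlein : Nat.card (dihedralKlein p) = 4 := by
  have hp0 : (p : ZMod (2 * p)) ≠ 0 := by
    rw [Ne, ZMod.natCast_eq_zero_iff]
    exact fun h => absurd (Nat.le_of_dvd (Nat.pos_of_ne_zero (NeZero.ne p)) h)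
      (by have := NeZero.ne p; omega)
  change Nat.card ({1, r (p : ZMod (2 * p)), sr 0, sr (p : ZMod (2 * p))} :
    Set (DihedralGroup (2 * p))) = 4
  rw [Nat.card_coe_set_eq, Set.ncard_insert_of_notMem, Set.ncard_insert_of_notMem,
    Set.ncard_pair] <;> simp [← r_zero, Ne.symm hp0]

theorem closure_zpowers_sr_one_union_dihedralKlein :
    Subgroup.closure (↑(Subgroup.zpowers (sr 1 : DihedralGroup (2 * p))) ∪
      (dihedralKlein p : Set (DihedralGroup (2 * p)))) = ⊤ := by
  set C := Subgroup.closure (↑(Subgroup.zpowers (sr 1 : DihedralGroup (2 * p))) ∪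
    (dihedralKlein p : Set (DihedralGroup (2 * p))))
  have hsr0 : sr 0 ∈ C := Subgroup.subset_closure (Or.inr (by simp [dihedralKlein]))
  have hr1 : r 1 ∈ C := by
    rw [← sub_zero (1 : ZMod (2 * p)), ← sr_mul_sr]
    exact C.mul_mem hsr0 (Subgroup.subset_closure (Or.inl (Subgroup.mem_zpowers _)))
  have hr (k : ZMod (2 * p)) : r k ∈ C := by
    rw [← ZMod.natCast_zmod_val k, ← r_one_pow]
    exact C.pow_mem hr1 _
  rw [eq_top_iff]
  rintro (k | k) -
  · exact hr k
  · rw [← zero_add k, ← sr_mul_r]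
    exact C.mul_mem hsr0 (hr k)

end Dihedral

theorem exists_actsHarmonically_card_eq_four_mul (p : ℕ) [NeZero p] :
    ∃ (Γ : Type) (i : Group Γ) (G : Multigraph) (A : @GraphAction Γ i G),
      @GraphAction.ActsHarmonically Γ i G A ∧ G.genus = ((p + 1 : ℕ) : ℤ) ∧
      Nat.card Γ = 4 * p := by
  have hcard : Nat.card (DihedralGroup (2 * p)) = 4 * p := by
    rw [DihedralGroup.nat_card]
    ring
  have hindex (K : Subgroup (DihedralGroup (2 * p))) (k : ℕ) (hk : Nat.card K * k = 4 * p) :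
      K.index = k := by
    have h := K.card_mul_index
    rw [hcard, ← hk] at h
    exact Nat.eq_of_mul_eq_mul_left Nat.card_pos h
  have hA := hindex (Subgroup.zpowers (DihedralGroup.sr 1)) (2 * p) (by
    rw [Nat.card_zpowers, DihedralGroup.orderOf_sr]
    ring)
  have hB := hindex (dihedralKlein p) p (by rw [card_dihedralKlein])
  have hgen := closure_zpowers_sr_one_union_dihedralKlein p
  refine ⟨_, _, _, cosetAction _ _ _ hgen, cosetAction_actsHarmonically hgen, ?_, hcard⟩
  rw [cosetGraph_genus, hcard, hA, hB]
  push_cast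
  ring

theorem M_eq_of_exists_of_forall_le {g n : ℕ}
    (h : ∃ (Γ : Type) (i : Group Γ) (G : Multigraph) (A : @GraphAction Γ i G),
      @GraphAction.ActsHarmonically Γ i G A ∧ G.genus = (g : ℤ) ∧ Nat.card Γ = n)
    (hle : ∀ (Γ : Type) [Group Γ] (G : Multigraph) (A : GraphAction Γ G),
      A.ActsHarmonically → G.genus = (g : ℤ) → Nat.card Γ ≤ n) : M g = n :=
  IsGreatest.csSup_eq ⟨h, by rintro _ ⟨Γ, i, G, A, hh, hg, rfl⟩; exact hle Γ G A hh hg⟩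

theorem mod_three_eq_two_of_gcd {p : ℕ} (hp : p.Prime) (hp6 : 6 < p)
    (hgcd : Nat.gcd ((p - 1) / 2) 6 = 1) : p % 3 = 2 := by
  have hodd : p % 2 = 1 := Nat.odd_iff.mp (hp.odd_of_ne_two (by omega))
  have h3 : ¬ 3 ∣ p := fun h => by rcases hp.eq_one_or_self_of_dvd 3 h with h | h <;> omega
  by_contra h
  have := Nat.dvd_gcd (show 3 ∣ (p - 1) / 2 by omega) (show 3 ∣ 6 by norm_num)
  rw [hgcd] at this
  omega

theorem M_prime_add_one {p : ℕ} (hp : p.Prime) (hp6 : 6 < p)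
    (hgcd : Nat.gcd ((p - 1) / 2) 6 = 1) : M (p + 1) = 4 * p := by
  have : NeZero p := ⟨hp.ne_zero⟩
  refine M_eq_of_exists_of_forall_le (exists_actsHarmonically_card_eq_four_mul p)
    fun Γ _ G A hh hg => A.card_le_four_mul hh hp hp6 (mod_three_eq_two_of_gcd hp hp6 hgcd) ?_
  rw [hg]
  push_cast
  ring

/-- There are infinitely many `g ≥ 2` with `M(g) = 4(g − 1)`; in
particular for every prime `p > 6` with `gcd((p − 1)/2, 6) = 1` one has
`M(p + 1) = 4p`. -/
theorem lower_bound_sharp :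
    {g : ℕ | 2 ≤ g ∧ M g = 4 * (g - 1)}.Infinite ∧
    ∀ p : ℕ, p.Prime → 6 < p → Nat.gcd ((p - 1) / 2) 6 = 1 → M (p + 1) = 4 * p := by
  refine ⟨?_, fun p hp hp6 hgcd => M_prime_add_one hp hp6 hgcd⟩
  have hprimes : {q : ℕ | q.Prime ∧ (q : ZMod 12) = 11}.Infinite :=
    Nat.infinite_setOfPred_prime_and_eq_mod (by decide)
  refine ((hprimes.image (add_left_injective 1).injOn)).mono ?_
  rintro _ ⟨q, ⟨hq, hmod⟩, rfl⟩
  have hq12 : q % 12 = 11 := by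
    simpa using (ZMod.natCast_eq_natCast_iff' q 11 12).mp (by simpa using hmod)
  have hgcd : Nat.gcd ((q - 1) / 2) 6 = 1 := by
    rw [show (q - 1) / 2 = 5 + q / 12 * 6 by omega, Nat.gcd_add_mul_right_left]
    rfl
  exact ⟨by simpa using hq.one_le, by rw [M_prime_add_one hq (by omega) hgcd, Nat.add_sub_cancel]⟩
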